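/- With the star tree $T$, $k = m+t$ and notation of the 3-PARTITION reduction above, if a minimizing $k$-subpartition $\mathcal{B}$ achieving $\mathrm{MISO}_k(T) = 1/(B+1)$ has residue number at most $1$, then there exists a partition $\{S_1,\ldots,S_m\}$ of $\{1,\ldots,3m\}$ with $\sum_{i \in S_j} w_i = B$ for every $j$. -/

import Mathlib

open Finset

variable {V : Type*} [Fintype V] [DecidableEq V]

/-- Total flow (sum of edge weights) between two vertex sets. -/
noncomputable def flowBetween (G : SimpleGraph V) [DecidableRel G.Adj]
    (φ : V → V → ℝ) (A B : Finset V) : ℝ :=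
  ∑ x ∈ A, ∑ y ∈ B, if G.Adj x y then φ x y else 0

/-- `φ(∂A)`: the total flow across the boundary of `A`. -/
noncomputable def bdryFlow (G : SimpleGraph V) [DecidableRel G.Adj]
    (φ : V → V → ℝ) (A : Finset V) : ℝ :=
  flowBetween G φ A Aᶜ

/-- The normalized flow `(φ(∂A) + p(A)) / ω(A)` of a set `A`. -/
noncomputable def nflow (G : SimpleGraph V) [DecidableRel G.Adj]
    (ω : V → ℝ) (φ : V → V → ℝ) (p : V → ℝ) (A : Finset V) : ℝ :=
  (bdryFlow G φ A + ∑ x ∈ A, p x) / ∑ x ∈ A, ω x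

/-- A `k`-subpartition: `k` nonempty pairwise disjoint subsets. -/
def IsSubpartition {k : ℕ} (𝒜 : Fin k → Finset V) : Prop :=
  (∀ i, (𝒜 i).Nonempty) ∧ ∀ i j, i ≠ j → Disjoint (𝒜 i) (𝒜 j)

/-- The (max-version) cost of a family of sets. -/
noncomputable def cost (G : SimpleGraph V) [DecidableRel G.Adj]
    (ω : V → ℝ) (φ : V → V → ℝ) (p : V → ℝ) {k : ℕ} (𝒜 : Fin k → Finset V) : ℝ :=
  ⨆ i, nflow G ω φ p (𝒜 i)

/-- `MISO_k(G)`: minimum cost over `k`-subpartitions. -/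
noncomputable def MISO (G : SimpleGraph V) [DecidableRel G.Adj]
    (ω : V → ℝ) (φ : V → V → ℝ) (p : V → ℝ) (k : ℕ) : ℝ :=
  sInf {c | ∃ 𝒜 : Fin k → Finset V, IsSubpartition 𝒜 ∧ c = cost G ω φ p 𝒜}

/-- `MNC_k(G)`: minimum cost over `k`-partitions. -/
noncomputable def MNC (G : SimpleGraph V) [DecidableRel G.Adj]
    (ω : V → ℝ) (φ : V → V → ℝ) (p : V → ℝ) (k : ℕ) : ℝ :=
  sInf {c | ∃ 𝒜 : Fin k → Finset V, IsSubpartition 𝒜 ∧ (∀ x, ∃ i, x ∈ 𝒜 i) ∧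
    c = cost G ω φ p 𝒜}

/-- The star graph on `Option α` with center `none`. -/
def starGraph (α : Type*) : SimpleGraph (Option α) where
  Adj u v := u ≠ v ∧ (u = none ∨ v = none)
  symm := ⟨fun u v ⟨h1, h2⟩ => ⟨h1.symm, h2.symm⟩⟩
  loopless := ⟨fun u ⟨h, _⟩ => h rfl⟩

instance {α : Type*} [DecidableEq α] : DecidableRel (starGraph α).Adj :=
  fun u v => inferInstanceAs (Decidable (u ≠ v ∧ (u = none ∨ v = none)))

/-- Vertex type of the star tree in the 3-PARTITION reduction:
center `none`, leaves `x_i` (`Sum.inl`), `y_j` (`Sum.inr (Sum.inl _)`) and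
`z_l` (`Sum.inr (Sum.inr _)`). -/
abbrev starV (m t : ℕ) := Option (Fin (3 * m) ⊕ (Fin m ⊕ Fin t))

/-- Vertex weights of the star tree of the 3-PARTITION reduction. -/
noncomputable def starW (m t B : ℕ) (w : Fin (3 * m) → ℕ) : starV m t → ℝ
  | none => 1
  | some (Sum.inl i) => (w i : ℝ) + B + 1
  | some (Sum.inr (Sum.inl _)) => 1
  | some (Sum.inr (Sum.inr _)) => (B : ℝ) + 1

/-!
Write `c = B + 1`. Cost `1/c` means `c · φ(∂A) ≤ ω(A)` for every part `A`. A part containing the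
center has boundary at least the number of leaves in the other parts, so summing over the parts
would give `2c(m + t - 1) ≤ ω(T) = 1 + (4m + t)c`, impossible for `t > 7m`. Hence the center is the
residue and the parts cover all leaves. For a part of leaves, `c · |A| ≤ ω(A)` reads
`B · #y(A) ≤ ∑_{x_i ∈ A} w_i`; both sides sum to `mB` over the parts, so every part has equality.
A part without a `y`-leaf then has no `x`-leaf, so contains a `z`-leaf; as there are `m + t`
parts and `m + t` leaves of type `y` or `z`, each part holds exactly one of them, and the
`x`-leaves of the part of `y_j` have total weight `B`.
-/

open Function

lemma nflow_le_cost (G : SimpleGraph V) [DecidableRel G.Adj] (ω : V → ℝ) (φ : V → V → ℝ)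
    (p : V → ℝ) {k : ℕ} (𝒜 : Fin k → Finset V) (i : Fin k) :
    nflow G ω φ p (𝒜 i) ≤ cost G ω φ p 𝒜 :=
  le_ciSup (f := fun i => nflow G ω φ p (𝒜 i)) (Set.finite_range _).bddAbove i

lemma mul_bdryFlow_le_of_cost_le (G : SimpleGraph V) [DecidableRel G.Adj] (ω : V → ℝ)
    (φ : V → V → ℝ) {k : ℕ} {𝒜 : Fin k → Finset V} {c : ℝ} (hc : 0 < c)
    (hcost : cost G ω φ (fun _ => 0) 𝒜 ≤ 1 / c) (i : Fin k) (hi : 0 < ∑ x ∈ 𝒜 i, ω x) :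
    c * bdryFlow G φ (𝒜 i) ≤ ∑ x ∈ 𝒜 i, ω x := by
  have h := (nflow_le_cost G ω φ _ 𝒜 i).trans hcost
  rw [nflow, sum_const_zero, add_zero, div_le_div_iff₀ hi hc, one_mul] at h
  linarith

section StarGraph

variable {α : Type*}

@[simp]
lemma starGraph_adj_some (a : α) (v : Option α) :
    (starGraph α).Adj (some a) v ↔ v = none := by
  simp only [starGraph, ne_eq, reduceCtorEq, false_or, and_iff_right_iff_imp]
  rintro rfl
  exact Option.some_ne_none a

@[simp]
lemma starGraph_adj_none (v : Option α) : (starGraph α).Adj none v ↔ v ≠ none := by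
  simp [starGraph, eq_comm]

variable [DecidableEq α] [Fintype α]

lemma bdryFlow_starGraph_of_none_notMem {A : Finset (Option α)} (hA : none ∉ A) :
    bdryFlow (starGraph α) (fun _ _ => 1) A = #A := by
  have hleaf : ∀ v ∈ A, (∑ u ∈ Aᶜ, if (starGraph α).Adj v u then (1 : ℝ) else 0) = 1 := by
    rintro (_ | a) hv
    · exact absurd hv hA
    · simp [hA]
  rw [bdryFlow, flowBetween, sum_congr rfl hleaf]
  simp

lemma bdryFlow_starGraph_of_none_mem {A : Finset (Option α)} (hA : none ∈ A) :
    bdryFlow (starGraph α) (fun _ _ => 1) A = #Aᶜ := by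
  have hleaf : ∀ v ∈ A.erase none,
      (∑ u ∈ Aᶜ, if (starGraph α).Adj v u then (1 : ℝ) else 0) = 0 := by
    rintro (_ | a) hv
    · simp at hv
    · simp [hA]
  have hcenter : (∑ u ∈ Aᶜ, if (starGraph α).Adj none u then (1 : ℝ) else 0) = #Aᶜ := by
    rw [sum_congr rfl fun u hu => if_pos ((starGraph_adj_none u).2 ?_)]
    · simp
    · rintro rfl; exact mem_compl.1 hu hA
  rw [bdryFlow, flowBetween, ← add_sum_erase _ _ hA, sum_congr rfl hleaf, hcenter]
  simp


lemma two_mul_le_sum_bdryFlow_starGraph {k : ℕ} {𝒜 : Fin k → Finset (Option α)}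
    (h𝒜 : IsSubpartition 𝒜) {i₀ : Fin k} (hi₀ : none ∈ 𝒜 i₀) :
    2 * ((k : ℝ) - 1) ≤ ∑ i, bdryFlow (starGraph α) (fun _ _ => 1) (𝒜 i) := by
  have hdisj : ∀ i ∈ univ.erase i₀, Disjoint (𝒜 i) (𝒜 i₀) := fun i hi =>
    h𝒜.2 i i₀ (ne_of_mem_erase hi)
  rw [← add_sum_erase _ _ (mem_univ i₀), bdryFlow_starGraph_of_none_mem hi₀,
    sum_congr rfl fun i hi => bdryFlow_starGraph_of_none_notMem
      fun h => disjoint_left.1 (hdisj i hi) h hi₀]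
  have hothers : k - 1 ≤ ∑ i ∈ univ.erase i₀, #(𝒜 i) := by
    simpa using card_nsmul_le_sum (univ.erase i₀) (fun i => #(𝒜 i)) 1 fun i _ =>
      (h𝒜.1 i).card_pos
  have hcompl : ∑ i ∈ univ.erase i₀, #(𝒜 i) ≤ #(𝒜 i₀)ᶜ := by
    rw [← card_biUnion fun i _ j _ hij => h𝒜.2 i j hij]
    refine card_le_card fun v hv => ?_
    obtain ⟨i, hi, hvi⟩ := mem_biUnion.1 hv
    exact mem_compl.2 (disjoint_left.1 (hdisj i hi) hvi)
  have hk : 1 ≤ k := i₀.pos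
  rw [← Nat.cast_sum]
  exact_mod_cast (show 2 * (k - 1) ≤ #(𝒜 i₀)ᶜ + ∑ i ∈ univ.erase i₀, #(𝒜 i) by omega)

lemma none_notMem_of_sum_lt {k : ℕ} {ω : Option α → ℝ} (hω : ∀ v, 0 ≤ ω v)
    {𝒜 : Fin k → Finset (Option α)} (h𝒜 : IsSubpartition 𝒜) {c : ℝ} (hc : 0 ≤ c)
    (hbdry : ∀ i, c * bdryFlow (starGraph α) (fun _ _ => 1) (𝒜 i) ≤ ∑ v ∈ 𝒜 i, ω v)
    (htotal : ∑ v, ω v < 2 * c * ((k : ℝ) - 1)) (i : Fin k) : none ∉ 𝒜 i := by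
  intro hi
  have hcount := two_mul_le_sum_bdryFlow_starGraph h𝒜 hi
  have hparts : c * ∑ i, bdryFlow (starGraph α) (fun _ _ => 1) (𝒜 i) ≤ ∑ v, ω v := by
    calc c * ∑ i, bdryFlow (starGraph α) (fun _ _ => 1) (𝒜 i)
        ≤ ∑ i, ∑ v ∈ 𝒜 i, ω v := by rw [mul_sum]; exact sum_le_sum fun i _ => hbdry i
      _ = ∑ v ∈ univ.biUnion 𝒜, ω v := (sum_biUnion fun i _ j _ hij => h𝒜.2 i j hij).symm
      _ ≤ ∑ v, ω v := sum_le_univ_sum_of_nonneg hω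
  nlinarith

end StarGraph

lemma mem_of_card_univ_sdiff_le_one {β : Type*} [Fintype β] [DecidableEq β] {s : Finset β}
    (h : #(univ \ s) ≤ 1) {x : β} (hx : x ∉ s) {y : β} (hy : y ≠ x) : y ∈ s := by
  by_contra hys
  exact hy (card_le_one.1 h y (by simpa using hys) x (by simpa using hx))

lemma sum_sum_filter_mem_eq {ι β γ M : Type*} [Fintype ι] [Fintype β] [DecidableEq γ]
    [AddCommMonoid M] (f : β → γ) {𝒜 : ι → Finset γ} (hdisj : Pairwise (Disjoint on 𝒜))
    (hcov : ∀ b, ∃ i, f b ∈ 𝒜 i) (g : β → M) :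
    ∑ i, ∑ b ∈ univ.filter (fun b => f b ∈ 𝒜 i), g b = ∑ b, g b := by
  simp_rw [sum_filter]
  rw [sum_comm]
  refine sum_congr rfl fun b _ => ?_
  obtain ⟨i, hi⟩ := hcov b
  rw [sum_eq_single i (fun j _ hji => if_neg fun hj => disjoint_left.1 (hdisj hji) hj hi)
    (by simp), if_pos hi]

lemma sum_card_filter_mem_eq {ι β γ : Type*} [Fintype ι] [Fintype β] [DecidableEq γ]
    (f : β → γ) {𝒜 : ι → Finset γ} (hdisj : Pairwise (Disjoint on 𝒜))
    (hcov : ∀ b, ∃ i, f b ∈ 𝒜 i) :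
    ∑ i, #(univ.filter (fun b => f b ∈ 𝒜 i)) = Fintype.card β := by
  simpa only [card_eq_sum_ones, Fintype.card_eq_sum_ones] using
    sum_sum_filter_mem_eq f hdisj hcov fun _ => 1

section Reduction

variable {m t B : ℕ} {w : Fin (3 * m) → ℕ}

def xLeaves (A : Finset (starV m t)) : Finset (Fin (3 * m)) :=
  univ.filter fun i => some (.inl i) ∈ A

def yLeaves (A : Finset (starV m t)) : Finset (Fin m) :=
  univ.filter fun j => some (.inr (.inl j)) ∈ A

def zLeaves (A : Finset (starV m t)) : Finset (Fin t) :=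
  univ.filter fun l => some (.inr (.inr l)) ∈ A

@[simp]
lemma mem_xLeaves {A : Finset (starV m t)} {i : Fin (3 * m)} :
    i ∈ xLeaves A ↔ some (.inl i) ∈ A := by
  simp [xLeaves]

@[simp]
lemma mem_yLeaves {A : Finset (starV m t)} {j : Fin m} :
    j ∈ yLeaves A ↔ some (.inr (.inl j)) ∈ A := by
  simp [yLeaves]

lemma sum_eq_of_none_notMem {M : Type*} [AddCommMonoid M] {A : Finset (starV m t)}
    (hA : none ∉ A) (f : starV m t → M) :
    ∑ v ∈ A, f v = ∑ i ∈ xLeaves A, f (some (.inl i)) + ∑ j ∈ yLeaves A, f (some (.inr (.inl j)))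
      + ∑ l ∈ zLeaves A, f (some (.inr (.inr l))) := by
  rw [← Fintype.sum_ite_mem, Fintype.sum_option, Fintype.sum_sum_type,
    Fintype.sum_sum_type, if_neg hA, zero_add, xLeaves, yLeaves, zLeaves, sum_filter, sum_filter,
    sum_filter, add_assoc]

lemma card_eq_of_none_notMem {A : Finset (starV m t)} (hA : none ∉ A) :
    #A = #(xLeaves A) + #(yLeaves A) + #(zLeaves A) := by
  simpa using sum_eq_of_none_notMem hA fun _ => (1 : ℕ)

lemma starW_pos (v : starV m t) : 0 < starW m t B w v := by
  rcases v with _ | i | j | l <;> simp only [starW] <;> positivity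

lemma sum_starW (hsum : ∑ i, w i = m * B) :
    ∑ v, starW m t B w v = 1 + (4 * m + t) * ((B : ℝ) + 1) := by
  have hx : ∑ i, ((w i : ℝ) + B + 1) = m * B + 3 * m * ((B : ℝ) + 1) := by
    rw [sum_add_distrib, sum_add_distrib, ← Nat.cast_sum, hsum]
    simp only [Nat.cast_mul, sum_const, card_univ, Fintype.card_fin, nsmul_eq_mul, Nat.cast_ofNat,
      mul_one]
    ring
  simp only [Fintype.sum_option, Fintype.sum_sum_type, starW, hx, sum_const, card_univ,
    Fintype.card_fin, nsmul_eq_mul, mul_one]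
  ring

lemma mul_card_yLeaves_le_sum_xLeaves {A : Finset (starV m t)} (hA : none ∉ A)
    (h : ((B : ℝ) + 1) * bdryFlow (starGraph _) (fun _ _ => 1) A ≤ ∑ v ∈ A, starW m t B w v) :
    B * #(yLeaves A) ≤ ∑ i ∈ xLeaves A, w i := by
  rw [bdryFlow_starGraph_of_none_notMem hA, card_eq_of_none_notMem hA,
    sum_eq_of_none_notMem hA] at h
  simp only [starW, sum_add_distrib, sum_const, nsmul_eq_mul, mul_one, ← Nat.cast_sum] at h
  push_cast at h
  exact_mod_cast (by linarith : (B : ℝ) * #(yLeaves A) ≤ ∑ i ∈ xLeaves A, (w i : ℝ))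

lemma sum_xLeaves_eq_mul_card_yLeaves {ι : Type*} [Fintype ι] {𝒜 : ι → Finset (starV m t)}
    (hdisj : Pairwise (Disjoint on 𝒜)) (hcov : ∀ a, ∃ p, some a ∈ 𝒜 p) (hsum : ∑ i, w i = m * B)
    (hle : ∀ p, B * #(yLeaves (𝒜 p)) ≤ ∑ i ∈ xLeaves (𝒜 p), w i) (p : ι) :
    ∑ i ∈ xLeaves (𝒜 p), w i = B * #(yLeaves (𝒜 p)) := by
  have htotal : ∑ p, B * #(yLeaves (𝒜 p)) = ∑ p, ∑ i ∈ xLeaves (𝒜 p), w i := by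
    rw [← mul_sum]
    simp only [xLeaves, yLeaves]
    rw [sum_card_filter_mem_eq _ hdisj fun j => hcov _, sum_sum_filter_mem_eq _ hdisj
      (fun i => hcov _), hsum, Fintype.card_fin, mul_comm]
  exact ((sum_eq_sum_iff_of_le fun p _ => hle p).1 htotal p (mem_univ p)).symm

lemma card_yLeaves_add_card_zLeaves_eq_one {𝒜 : Fin (m + t) → Finset (starV m t)}
    (hne : ∀ p, (𝒜 p).Nonempty) (hdisj : Pairwise (Disjoint on 𝒜)) (hcenter : ∀ p, none ∉ 𝒜 p)
    (hcov : ∀ a, ∃ p, some a ∈ 𝒜 p) (hpos : ∀ i, 0 < w i)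
    (hW : ∀ p, ∑ i ∈ xLeaves (𝒜 p), w i = B * #(yLeaves (𝒜 p))) (p : Fin (m + t)) :
    #(yLeaves (𝒜 p)) + #(zLeaves (𝒜 p)) = 1 := by
  have hge : ∀ p, 1 ≤ #(yLeaves (𝒜 p)) + #(zLeaves (𝒜 p)) := by
    intro p
    by_contra! h
    have hx : xLeaves (𝒜 p) = ∅ := by
      have hp := hW p
      rw [show #(yLeaves (𝒜 p)) = 0 by omega, mul_zero, sum_eq_zero_iff] at hp
      exact eq_empty_of_forall_notMem fun i hi => (hpos i).ne' (hp i hi)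
    have hcard := (hne p).card_pos
    rw [card_eq_of_none_notMem (hcenter p), hx, card_empty] at hcard
    omega
  have htotal : ∑ _p : Fin (m + t), 1 = ∑ p, (#(yLeaves (𝒜 p)) + #(zLeaves (𝒜 p))) := by
    rw [sum_add_distrib]
    simp only [yLeaves, zLeaves]
    rw [sum_card_filter_mem_eq _ hdisj fun j => hcov _,
      sum_card_filter_mem_eq _ hdisj fun l => hcov _]
    simp
  exact ((sum_eq_sum_iff_of_le fun p _ => hge p).1 htotal p (mem_univ p)).symm

lemma exists_threePartition_of_card_yLeaves_le_one {ι : Type*}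
    {𝒜 : ι → Finset (starV m t)} (hdisj : Pairwise (Disjoint on 𝒜))
    (hcov : ∀ a, ∃ p, some a ∈ 𝒜 p) (hpos : ∀ i, 0 < w i)
    (hW : ∀ p, ∑ i ∈ xLeaves (𝒜 p), w i = B * #(yLeaves (𝒜 p)))
    (hone : ∀ p, #(yLeaves (𝒜 p)) ≤ 1) :
    ∃ S : Fin m → Finset (Fin (3 * m)), (∀ j j', j ≠ j' → Disjoint (S j) (S j')) ∧
      (∀ i, ∃ j, i ∈ S j) ∧ ∀ j, ∑ i ∈ S j, w i = B := by
  choose part hpart using fun j : Fin m => hcov (.inr (.inl j))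
  have hpart_eq : ∀ j p, some (.inr (.inl j)) ∈ 𝒜 p → part j = p := fun j p hp => by
    by_contra h
    exact disjoint_left.1 (hdisj h) (hpart j) hp
  have hy : ∀ j, yLeaves (𝒜 (part j)) = {j} := fun j => by
    have hj : j ∈ yLeaves (𝒜 (part j)) := mem_yLeaves.2 (hpart j)
    refine eq_singleton_iff_unique_mem.2 ⟨hj, fun j' hj' => ?_⟩
    exact card_le_one.1 (hone (part j)) j' hj' j hj
  refine ⟨fun j => xLeaves (𝒜 (part j)), fun j j' hjj' => ?_, fun i => ?_, fun j => ?_⟩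
  · have hne : part j ≠ part j' := fun h => hjj' (singleton_inj.1 ((hy j).symm.trans (h ▸ hy j')))
    exact disjoint_left.2 fun i hi hi' =>
      disjoint_left.1 (hdisj hne) (mem_xLeaves.1 hi) (mem_xLeaves.1 hi')
  · obtain ⟨p, hp⟩ := hcov (.inl i)
    have hx : i ∈ xLeaves (𝒜 p) := mem_xLeaves.2 hp
    obtain ⟨j, hj⟩ : (yLeaves (𝒜 p)).Nonempty := by
      rw [← card_pos]
      refine Nat.pos_of_mul_pos_left (a := B) ?_
      rw [← hW p]
      exact (hpos i).trans_le (single_le_sum (fun _ _ => Nat.zero_le _) hx)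
    refine ⟨j, ?_⟩
    rwa [← hpart_eq j p (mem_yLeaves.1 hj)] at hx
  · simp only [hW, hy, card_singleton, mul_one]

end Reduction

theorem starTree_residue_le_one_implies_threePartition_general
    (m B t : ℕ) (hm : 1 ≤ m) (ht : 7 * m < t)
    (w : Fin (3 * m) → ℕ)
    (hw : ∀ i, B < 4 * w i ∧ 2 * w i < B)
    (hsum : ∑ i, w i = m * B)
    (𝒜 : Fin (m + t) → Finset (starV m t))
    (h𝒜 : IsSubpartition 𝒜)
    (hach : cost (starGraph (Fin (3 * m) ⊕ (Fin m ⊕ Fin t))) (starW m t B w)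
        (fun _ _ => 1) (fun _ => 0) 𝒜 = 1 / ((B : ℝ) + 1))
    (hres : ((Finset.univ : Finset (starV m t)) \ Finset.univ.biUnion 𝒜).card ≤ 1) :
    ∃ S : Fin m → Finset (Fin (3 * m)),
      (∀ j j', j ≠ j' → Disjoint (S j) (S j')) ∧
      (∀ i, ∃ j, i ∈ S j) ∧
      ∀ j, ∑ i ∈ S j, w i = B := by
  have hdisj : Pairwise (Disjoint on 𝒜) := fun i j => h𝒜.2 i j
  have hbdry : ∀ p, ((B : ℝ) + 1) * bdryFlow (starGraph _) (fun _ _ => 1) (𝒜 p)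
      ≤ ∑ v ∈ 𝒜 p, starW m t B w v := fun p =>
    mul_bdryFlow_le_of_cost_le _ _ _ (by positivity) hach.le p
      (sum_pos (fun v _ => starW_pos v) (h𝒜.1 p))
  have hcenter : ∀ p, none ∉ 𝒜 p := by
    refine none_notMem_of_sum_lt (fun v => (starW_pos v).le) h𝒜 (by positivity) hbdry ?_
    have hmt : (2 * m + 4 : ℝ) ≤ t := by exact_mod_cast (by omega : 2 * m + 4 ≤ t)
    rw [sum_starW hsum]
    push_cast
    nlinarith
  have hcov : ∀ a, ∃ p, some a ∈ 𝒜 p := fun a => by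
    simpa using mem_of_card_univ_sdiff_le_one hres (by simpa using hcenter) (Option.some_ne_none a)
  have hpos : ∀ i, 0 < w i := fun i => by have := (hw i).1; omega
  have hW := sum_xLeaves_eq_mul_card_yLeaves hdisj hcov hsum fun p =>
    mul_card_yLeaves_le_sum_xLeaves (hcenter p) (hbdry p)
  have hy : ∀ p, #(yLeaves (𝒜 p)) ≤ 1 := fun p =>
    (card_yLeaves_add_card_zLeaves_eq_one h𝒜.1 hdisj hcenter hcov hpos hW p).le.trans'
      (Nat.le_add_right _ _)
  exact exists_threePartition_of_card_yLeaves_le_one hdisj hcov hpos hW hy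

/-- If a minimizing `(m+t)`-subpartition of the star tree achieving
`MISO = 1/(B+1)` has residue number at most `1`, then the 3-PARTITION
instance has a solution. -/
theorem starTree_residue_le_one_implies_threePartition
    (m B t : ℕ) (hm : 1 ≤ m) (hB : 1 ≤ B) (ht : 7 * m < t)
    (w : Fin (3 * m) → ℕ)
    (hw : ∀ i, B < 4 * w i ∧ 2 * w i < B)
    (hsum : ∑ i, w i = m * B)
    (𝒜 : Fin (m + t) → Finset (starV m t))
    (h𝒜 : IsSubpartition 𝒜)
    (hmiso : MISO (starGraph (Fin (3 * m) ⊕ (Fin m ⊕ Fin t))) (starW m t B w)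
        (fun _ _ => 1) (fun _ => 0) (m + t) = 1 / ((B : ℝ) + 1))
    (hach : cost (starGraph (Fin (3 * m) ⊕ (Fin m ⊕ Fin t))) (starW m t B w)
        (fun _ _ => 1) (fun _ => 0) 𝒜 = 1 / ((B : ℝ) + 1))
    (hres : ((Finset.univ : Finset (starV m t)) \ Finset.univ.biUnion 𝒜).card ≤ 1) :
    ∃ S : Fin m → Finset (Fin (3 * m)),
      (∀ j j', j ≠ j' → Disjoint (S j) (S j')) ∧
      (∀ i, ∃ j, i ∈ S j) ∧
      ∀ j, ∑ i ∈ S j, w i = B :=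
  starTree_residue_le_one_implies_threePartition_general m B t hm ht w hw hsum 𝒜 h𝒜 hach hres
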